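/- arXiv:math/9712264 — 2 statements merged into one kernel-verified Lean document; each statement's English description precedes it below -/
import Mathlib

section
/- Let G(p,q) denote the subgroup of SO(3) generated by the rotation by 2π/p about the x-axis and the rotation by 2π/q about the y-axis. If 4 divides both p and q, then G(p,q) = G(lcm(p,q), 4). -/
open Real

/-- Rotation by angle `θ` about the `x`-axis, as a `3 × 3` real matrix. -/
noncomputable def Rx (θ : ℝ) : Matrix (Fin 3) (Fin 3) ℝ :=
  !![1, 0, 0; 0, Real.cos θ, -Real.sin θ; 0, Real.sin θ, Real.cos θ]

/-- Rotation by angle `θ` about the `y`-axis, as a `3 × 3` real matrix. -/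
noncomputable def Ry (θ : ℝ) : Matrix (Fin 3) (Fin 3) ℝ :=
  !![Real.cos θ, 0, Real.sin θ; 0, 1, 0; -Real.sin θ, 0, Real.cos θ]

/-- `SO(3)`, realized as the subgroup of the orthogonal group `O(3)` of elements of
determinant `1`. -/
noncomputable def SO3 : Subgroup (Matrix.orthogonalGroup (Fin 3) ℝ) where
  carrier := {A | (A : Matrix (Fin 3) (Fin 3) ℝ).det = 1}
  one_mem' := by simp
  mul_mem' := by
    intro a b ha hb
    simp only [Set.mem_setOf_eq, Matrix.UnitaryGroup.mul_val, Matrix.det_mul] at *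
    rw [ha, hb, mul_one]
  inv_mem' := by
    intro a ha
    simp only [Set.mem_setOf_eq, Matrix.UnitaryGroup.inv_val, Matrix.star_eq_conjTranspose,
      Matrix.det_conjTranspose] at *
    rw [ha]; simp

/-- The underlying matrix of an element of `SO(3)`. -/
def soMat (A : SO3) : Matrix (Fin 3) (Fin 3) ℝ := A.1.1

lemma Rx_mul (a b : ℝ) : Rx a * Rx b = Rx (a + b) := by
  ext i j
  fin_cases i <;> fin_cases j <;>
    simp [Rx, Matrix.mul_apply, Fin.sum_univ_succ, Matrix.vecHead, Matrix.vecTail,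
      Real.cos_add, Real.sin_add] <;> ring

lemma Ry_mul (a b : ℝ) : Ry a * Ry b = Ry (a + b) := by
  ext i j
  fin_cases i <;> fin_cases j <;>
    simp [Ry, Matrix.mul_apply, Fin.sum_univ_succ, Matrix.vecHead, Matrix.vecTail,
      Real.cos_add, Real.sin_add] <;> ring

lemma Rx_zero : Rx 0 = 1 := by
  ext i j; fin_cases i <;> fin_cases j <;>
    simp [Rx, Matrix.vecHead, Matrix.vecTail]

lemma Ry_zero : Ry 0 = 1 := by
  ext i j; fin_cases i <;> fin_cases j <;>
    simp [Ry, Matrix.vecHead, Matrix.vecTail]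

lemma Rx_pow (a : ℝ) (n : ℕ) : Rx a ^ n = Rx (n * a) := by
  induction n with
  | zero => simp [Rx_zero]
  | succ n ih => rw [pow_succ, ih, Rx_mul]; push_cast; ring_nf

lemma Ry_pow (a : ℝ) (n : ℕ) : Ry a ^ n = Ry (n * a) := by
  induction n with
  | zero => simp [Ry_zero]
  | succ n ih => rw [pow_succ, ih, Ry_mul]; push_cast; ring_nf

lemma Rx_inv (a : ℝ) : (Rx a)⁻¹ = Rx (-a) :=
  Matrix.inv_eq_right_inv (by rw [Rx_mul, add_neg_cancel, Rx_zero])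

lemma key (θ : ℝ) : Ry θ * (Rx (π/2) * Ry (π/2)) = Rx (π/2) * Ry (π/2) * Rx θ := by
  ext i j
  fin_cases i <;> fin_cases j <;>
    simp [Rx, Ry, Matrix.mul_apply, Fin.sum_univ_succ, Matrix.vecHead, Matrix.vecTail]

lemma key2 (θ : ℝ) :
    (Ry (-(π/2)) * Rx (-(π/2))) * (Ry θ * (Rx (π/2) * Ry (π/2))) = Rx θ := by
  rw [key, show (Ry (-(π/2)) * Rx (-(π/2))) * (Rx (π/2) * Ry (π/2) * Rx θ)
      = Ry (-(π/2)) * (Rx (-(π/2)) * Rx (π/2)) * Ry (π/2) * Rx θ by noncomm_ring,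
    Rx_mul, neg_add_cancel, Rx_zero, mul_one, Ry_mul, neg_add_cancel, Ry_zero, one_mul]

lemma soMat_mul (A B : SO3) : soMat (A * B) = soMat A * soMat B := rfl
lemma soMat_one : soMat (1 : SO3) = 1 := rfl
lemma soMat_inj : Function.Injective soMat := fun _ _ h => Subtype.ext (Subtype.ext h)

lemma soMat_pow (A : SO3) (n : ℕ) : soMat (A ^ n) = soMat A ^ n := by
  induction n with
  | zero => simp [soMat_one]
  | succ n ih => rw [pow_succ, pow_succ, soMat_mul, ih]

lemma soMat_inv (A : SO3) : soMat A⁻¹ = (soMat A)⁻¹ := by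
  symm; apply Matrix.inv_eq_right_inv; rw [← soMat_mul, mul_inv_cancel, soMat_one]

lemma soMat_zpow_Rx {U : SO3} {t : ℝ} (h : soMat U = Rx t) (k : ℤ) :
    soMat (U ^ k) = Rx (k * t) := by
  cases k with
  | ofNat n => rw [Int.ofNat_eq_coe, zpow_natCast, soMat_pow, h, Rx_pow]; norm_num
  | negSucc n =>
      rw [zpow_negSucc, soMat_inv, soMat_pow, h, Rx_pow, Rx_inv,
        show -((n+1:ℕ) * t) = (Int.negSucc n : ℝ) * t by push_cast; ring]

/-- Let `G(p,q) ≤ SO(3)` be generated by the rotations by `2π/p` about the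
`x`-axis and by `2π/q` about the `y`-axis.  If `4 ∣ p` and `4 ∣ q`, then
`G(p,q) = G(lcm p q, 4)`. -/
theorem stmt6 (p q : ℕ) (hp : 0 < p) (hq : 0 < q) (h4p : 4 ∣ p) (h4q : 4 ∣ q)
    (A B C D : SO3)
    (hA : soMat A = Rx (2 * π / p)) (hB : soMat B = Ry (2 * π / q))
    (hC : soMat C = Rx (2 * π / (Nat.lcm p q))) (hD : soMat D = Ry (2 * π / 4)) :
    Subgroup.closure {A, B} = Subgroup.closure {C, D} := by
  have hp0 : (p : ℝ) ≠ 0 := Nat.cast_ne_zero.2 hp.ne'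
  have hq0 : (q : ℝ) ≠ 0 := Nat.cast_ne_zero.2 hq.ne'
  set L := Nat.lcm p q with hLdef
  have hpL : p ∣ L := Nat.dvd_lcm_left p q
  have hqL : q ∣ L := Nat.dvd_lcm_right p q
  have h4L : 4 ∣ L := h4p.trans hpL
  have hLpos : 0 < L := Nat.pos_of_ne_zero (Nat.lcm_ne_zero hp.ne' hq.ne')
  have hL0 : (L : ℝ) ≠ 0 := Nat.cast_ne_zero.2 hLpos.ne'
  have cast_div : ∀ a b : ℕ, b ∣ a → (b : ℝ) ≠ 0 → ((a / b : ℕ) : ℝ) = (a : ℝ) / b :=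
    fun a b h hb => Nat.cast_div h hb
  have hDpi : soMat D = Ry (π / 2) := by
    rw [hD, show (2 * π / 4 : ℝ) = π / 2 by ring]
  apply le_antisymm
  · rw [Subgroup.closure_le]
    have hCm : C ∈ Subgroup.closure {C, D} := Subgroup.subset_closure (by simp)
    have hDm : D ∈ Subgroup.closure {C, D} := Subgroup.subset_closure (by simp)
    intro x hx
    simp only [Set.mem_insert_iff, Set.mem_singleton_iff] at hx
    rcases hx with rfl | rfl
    · have hx : x = C ^ (L / p) := by
        apply soMat_inj
        rw [soMat_pow, hC, Rx_pow, hA, cast_div L p hpL hp0,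
          show (L:ℝ)/p * (2*π/L) = 2*π/p by field_simp]
      rw [hx]; exact pow_mem hCm _
    · have hX : soMat (C ^ (L / 4)) = Rx (π / 2) := by
        rw [soMat_pow, hC, Rx_pow, cast_div L 4 h4L (by norm_num),
          show (L:ℝ)/((4:ℕ):ℝ) * (2*π/L) = π/2 by field_simp; ring]
      have hS : soMat (C ^ (L / q)) = Rx (2 * π / q) := by
        rw [soMat_pow, hC, Rx_pow, cast_div L q hqL hq0,
          show (L:ℝ)/q * (2*π/L) = 2*π/q by field_simp]
      have hkey : x * (C ^ (L / 4) * D) = (C ^ (L / 4) * D) * C ^ (L / q) := by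
        apply soMat_inj
        rw [soMat_mul, soMat_mul, soMat_mul, soMat_mul, hX, hDpi, hB, hS, key]
      have hx : x = (C ^ (L / 4) * D) * C ^ (L / q) * (C ^ (L / 4) * D)⁻¹ := by
        rw [← hkey]; group
      rw [hx]
      exact mul_mem (mul_mem (mul_mem (pow_mem hCm _) hDm) (pow_mem hCm _))
        (inv_mem (mul_mem (pow_mem hCm _) hDm))
  · rw [Subgroup.closure_le]
    have hAm : A ∈ Subgroup.closure {A, B} := Subgroup.subset_closure (by simp)
    have hBm : B ∈ Subgroup.closure {A, B} := Subgroup.subset_closure (by simp)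
    intro x hx
    simp only [Set.mem_insert_iff, Set.mem_singleton_iff] at hx
    have hY : soMat (B ^ (q / 4)) = Ry (π / 2) := by
      rw [soMat_pow, hB, Ry_pow, cast_div q 4 h4q (by norm_num),
        show (q:ℝ)/((4:ℕ):ℝ) * (2*π/q) = π/2 by field_simp; ring]
    rcases hx with rfl | rfl
    · -- x = C
      have hX : soMat (A ^ (p / 4)) = Rx (π / 2) := by
        rw [soMat_pow, hA, Rx_pow, cast_div p 4 h4p (by norm_num),
          show (p:ℝ)/((4:ℕ):ℝ) * (2*π/p) = π/2 by field_simp; ring]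
      set Z := A ^ (p / 4) * B ^ (q / 4) with hZdef
      have hZm : Z ∈ Subgroup.closure {A, B} := mul_mem (pow_mem hAm _) (pow_mem hBm _)
      have hZmat : soMat Z = Rx (π / 2) * Ry (π / 2) := by rw [hZdef, soMat_mul, hX, hY]
      have hZinv : soMat Z⁻¹ = Ry (-(π / 2)) * Rx (-(π / 2)) := by
        rw [soMat_inv, hZmat]
        apply Matrix.inv_eq_left_inv
        rw [show (Ry (-(π/2)) * Rx (-(π/2))) * (Rx (π/2) * Ry (π/2))
            = Ry (-(π/2)) * (Rx (-(π/2)) * Rx (π/2)) * Ry (π/2) by noncomm_ring,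
          Rx_mul, neg_add_cancel, Rx_zero, mul_one, Ry_mul, neg_add_cancel, Ry_zero]
      set S := Z⁻¹ * (B * Z) with hSdef
      have hSm : S ∈ Subgroup.closure {A, B} := mul_mem (inv_mem hZm) (mul_mem hBm hZm)
      have hSmat : soMat S = Rx (2 * π / q) := by
        rw [hSdef, soMat_mul, soMat_mul, hZinv, hB, hZmat, key2]
      set a := Nat.gcdA p q with hadef
      set b := Nat.gcdB p q with hbdef
      have hbez : (Nat.gcd p q : ℤ) = p * a + q * b := Nat.gcd_eq_gcd_ab p q
      have hbezR : (Nat.gcd p q : ℝ) = p * a + q * b := by exact_mod_cast hbez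
      have hgl : (Nat.gcd p q : ℝ) * L = p * q := by exact_mod_cast Nat.gcd_mul_lcm p q
      have hx : x = A ^ b * S ^ a := by
        apply soMat_inj
        have hang : (b:ℝ) * (2*π/p) + (a:ℝ) * (2*π/q) = 2*π/L := by
          field_simp
          linear_combination (-(L:ℝ)) * hbezR + hgl
        rw [soMat_mul, soMat_zpow_Rx hA, soMat_zpow_Rx hSmat, Rx_mul, hC, hang]
      rw [hx]
      exact mul_mem (zpow_mem hAm _) (zpow_mem hSm _)
    · -- x = D
      have hx : x = B ^ (q / 4) := soMat_inj (by rw [hY, hDpi])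
      rw [hx]; exact pow_mem hBm _
end

section
/- The rotation angle 2·arctan(1/3) is an irrational multiple of π; hence the subgroup of SO(2) generated by rotations by π/2 and 2·arctan(1/3) is infinite and dense in SO(2). -/
open Real

private def cseq : ℕ → ℤ
  | 0 => 2
  | 1 => 8
  | (n+2) => 8 * cseq (n+1) - 25 * cseq n

lemma cos_theta : Real.cos (2 * Real.arctan (1/3)) = 4/5 := by
  rw [two_mul, Real.cos_add]
  have h1 : Real.cos (Real.arctan (1/3)) ^ 2 = 1 / (1 + (1/3:ℝ)^2) := Real.cos_sq_arctan _
  have h2 : Real.sin (Real.arctan (1/3)) * Real.sin (Real.arctan (1/3))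
      = 1 - Real.cos (Real.arctan (1/3)) ^ 2 := by
    have := Real.sin_sq_add_cos_sq (Real.arctan (1/3)); nlinarith [this]
  rw [h2, h1]; norm_num; nlinarith [h1]


lemma cseq_real : ∀ n : ℕ, (cseq n : ℝ) = 2 * 5^n * Real.cos (n * (2 * Real.arctan (1/3))) := by
  set θ := 2 * Real.arctan (1/3) with hθ
  have key : ∀ n : ℕ, (cseq n : ℝ) = 2 * 5^n * Real.cos (n * θ) ∧
      (cseq (n+1) : ℝ) = 2 * 5^(n+1) * Real.cos ((n+1 : ℕ) * θ) := by
    intro n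
    induction n with
    | zero =>
      constructor
      · simp [cseq]
      · push_cast
        show ((8:ℤ) : ℝ) = _
        rw [one_mul, cos_theta]
        norm_num
    | succ n ih =>
      obtain ⟨ih1, ih2⟩ := ih
      refine ⟨ih2, ?_⟩
      have hrec : (cseq (n+2) : ℝ) = 8 * (cseq (n+1) : ℝ) - 25 * (cseq n : ℝ) := by
        have : cseq (n+2) = 8 * cseq (n+1) - 25 * cseq n := rfl
        rw [this]; push_cast; ring
      have hc : Real.cos (((n:ℝ)+2) * θ) = 2 * Real.cos θ * Real.cos (((n:ℝ)+1) * θ)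
          - Real.cos ((n:ℝ) * θ) := by
        have e1 : ((n:ℝ)+2) * θ = ((n:ℝ)+1) * θ + θ := by ring
        have e2 : (n:ℝ) * θ = ((n:ℝ)+1) * θ - θ := by ring
        rw [e1, Real.cos_add, e2, Real.cos_sub]; ring
      show (cseq (n+2) : ℝ) = 2 * 5^(n+2) * Real.cos (((n+2 : ℕ) : ℝ) * θ)
      push_cast at ih1 ih2 ⊢
      rw [hrec, ih1, ih2, hc, cos_theta]
      ring
  exact fun n => (key n).1


lemma cseq_mod : ∀ n : ℕ, (cseq (n+1) : ZMod 5) = 3^(n+1) := by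
  have key : ∀ n : ℕ, (cseq (n+1) : ZMod 5) = 3^(n+1) ∧ (cseq (n+2) : ZMod 5) = 3^(n+2) := by
    intro n
    induction n with
    | zero =>
      exact ⟨by simp only [cseq]; decide, by simp only [cseq]; decide⟩
    | succ n ih =>
      obtain ⟨ih1, ih2⟩ := ih
      refine ⟨ih2, ?_⟩
      have : cseq (n+3) = 8 * cseq (n+2) - 25 * cseq (n+1) := rfl
      show (cseq (n+3) : ZMod 5) = 3^(n+3)
      rw [this]
      push_cast [ih1, ih2]
      have h8 : (8 : ZMod 5) = 3 := by decide
      have h25 : (25 : ZMod 5) = 0 := by decide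
      rw [h8, h25]
      ring
  exact fun n => (key n).1

lemma three_zmod_ne : (3 : ZMod 5) ≠ 0 := by decide

lemma not_dvd_cseq (n : ℕ) : ¬ (5 : ℤ) ∣ cseq (n+1) := by
  haveI : Fact (Nat.Prime 5) := ⟨by norm_num⟩
  intro h
  have : (cseq (n+1) : ZMod 5) = 0 := by
    exact_mod_cast (ZMod.intCast_zmod_eq_zero_iff_dvd _ 5).mpr h
  rw [cseq_mod] at this
  exact pow_ne_zero _ three_zmod_ne this

lemma irr_theta : Irrational (2 * Real.arctan (1/3) / π) := by
  set θ := 2 * Real.arctan (1/3) with hθ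
  rw [Irrational]
  rintro ⟨q, hq⟩
  have hpi : (π : ℝ) ≠ 0 := Real.pi_ne_zero
  have hθq : θ = (q : ℝ) * π := by
    field_simp at hq
    linarith [hq]
  set n : ℕ := 2 * q.den with hn
  have hden : ((q.den : ℚ)) * q = q.num := by
    rw [mul_comm]
    exact_mod_cast Rat.mul_den_eq_num q
  have hcos : Real.cos ((n : ℝ) * θ) = 1 := by
    have : (n : ℝ) * θ = (q.num : ℝ) * (2 * π) := by
      rw [hθq, hn]
      push_cast
      have h2 : ((q.den : ℝ)) * (q : ℝ) = (q.num : ℝ) := by exact_mod_cast hden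
      rw [← h2]; ring
    rw [this]
    exact_mod_cast Real.cos_int_mul_two_pi q.num
  have hval : (cseq n : ℝ) = 2 * 5^n := by
    rw [cseq_real n, hcos]; ring
  have hval' : cseq n = 2 * 5^n := by exact_mod_cast hval
  have hpos : 1 ≤ n := by
    have := q.den_pos
    omega
  obtain ⟨m, hm⟩ := Nat.exists_eq_add_of_le hpos
  have hdvd : (5 : ℤ) ∣ cseq n := by
    rw [hval', hm]
    exact ⟨2 * 5^m, by ring⟩
  rw [hm] at hdvd
  exact not_dvd_cseq m (by rwa [add_comm] at hdvd)

lemma dense_real_subgroup :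
    Dense ((AddSubgroup.closure ({π/2, 2 * Real.arctan (1/3), 2*π} : Set ℝ) : AddSubgroup ℝ) : Set ℝ) := by
  set θ := 2 * Real.arctan (1/3) with hθ
  set S := AddSubgroup.closure ({π/2, θ, 2*π} : Set ℝ) with hS
  rcases S.dense_or_cyclic with h | ⟨a, ha⟩
  · exact h
  · exfalso
    have hθS : θ ∈ S := AddSubgroup.subset_closure (by simp)
    have h2πS : (2*π : ℝ) ∈ S := AddSubgroup.subset_closure (by simp)
    rw [ha, AddSubgroup.mem_closure_singleton] at hθS h2πS
    obtain ⟨m, hm⟩ := hθS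
    obtain ⟨k, hk⟩ := h2πS
    have hk0 : (k : ℝ) ≠ 0 := by
      intro h0
      rw [zsmul_eq_mul, h0, zero_mul] at hk
      exact Real.two_pi_pos.ne' hk.symm
    have ha0 : a ≠ 0 := by
      intro h0
      rw [h0, smul_zero] at hk
      exact Real.two_pi_pos.ne' hk.symm
    apply irr_theta
    refine ⟨(2*m : ℚ)/k, ?_⟩
    rw [zsmul_eq_mul] at hm hk
    have hpi : π = (k : ℝ) * a / 2 := by linarith [hk]
    show (((2*m : ℚ)/k : ℚ) : ℝ) = θ / π
    push_cast
    rw [← hm, hpi]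
    field_simp

lemma angle_coe_surj : Function.Surjective ((↑) : ℝ → Real.Angle) := fun x =>
  Real.Angle.induction_on x fun r => ⟨r, rfl⟩

lemma angle_infinite : Infinite Real.Angle := by
  haveI : Fact ((0:ℝ) < 2*π) := ⟨by positivity⟩
  haveI : Infinite (Set.Ico (0:ℝ) (0 + 2*π)) := Set.Ico.infinite (by positivity)
  exact (AddCircle.equivIco (2*π) 0).infinite_iff.mpr this

/-- The rotation angle `2·arctan(1/3)` is an irrational multiple of `π`; hence
the subgroup of `SO(2) ≅ ℝ/2πℤ` generated by the rotations by `π/2` and `2·arctan(1/3)` is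
infinite and dense in `SO(2)`. -/
theorem stmt15 :
    Irrational (2 * Real.arctan (1 / 3) / π) ∧
      (↑(AddSubgroup.closure ({((π / 2 : ℝ) : Real.Angle),
          ((2 * Real.arctan (1 / 3) : ℝ) : Real.Angle)} : Set Real.Angle)) : Set Real.Angle).Infinite ∧
      Dense (↑(AddSubgroup.closure ({((π / 2 : ℝ) : Real.Angle),
          ((2 * Real.arctan (1 / 3) : ℝ) : Real.Angle)} : Set Real.Angle)) : Set Real.Angle) := by
  have hirr : Irrational (2 * Real.arctan (1 / 3) / π) := by
    have := irr_theta
    norm_num at this ⊢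
    exact this
  set T := AddSubgroup.closure ({((π / 2 : ℝ) : Real.Angle),
      ((2 * Real.arctan (1 / 3) : ℝ) : Real.Angle)} : Set Real.Angle) with hT
  have hdense : Dense (T : Set Real.Angle) := by
    have himg : Dense (Real.Angle.coeHom '' (AddSubgroup.closure
        ({π/2, 2 * Real.arctan (1/3), 2*π} : Set ℝ) : Set ℝ)) := by
      refine DenseRange.dense_image ?_ Real.Angle.continuous_coe ?_
      · rw [Real.Angle.coe_coeHom]
        exact angle_coe_surj.denseRange
      · have := dense_real_subgroup
        norm_num at this ⊢
        exact this
    refine himg.mono ?_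
    have hmap : (AddSubgroup.closure ({π/2, 2 * Real.arctan (1/3), 2*π} : Set ℝ)).map
        Real.Angle.coeHom = AddSubgroup.closure (Real.Angle.coeHom ''
        ({π/2, 2 * Real.arctan (1/3), 2*π} : Set ℝ)) :=
      AddMonoidHom.map_closure _ _
    intro x hx
    obtain ⟨y, hy, rfl⟩ := hx
    have hxmem : Real.Angle.coeHom y ∈ (AddSubgroup.closure
        ({π/2, 2 * Real.arctan (1/3), 2*π} : Set ℝ)).map Real.Angle.coeHom :=
      ⟨y, hy, rfl⟩
    rw [hmap] at hxmem
    have hle : AddSubgroup.closure (Real.Angle.coeHom ''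
        ({π/2, 2 * Real.arctan (1/3), 2*π} : Set ℝ)) ≤ T := by
      apply (AddSubgroup.closure_le T).mpr
      rw [Set.image_insert_eq, Set.image_insert_eq, Set.image_singleton]
      intro z hz
      rcases hz with rfl | rfl | rfl
      · exact AddSubgroup.subset_closure (by left; rfl)
      · exact AddSubgroup.subset_closure (by right; rfl)
      · show ((2*π : ℝ) : Real.Angle) ∈ T
        rw [Real.Angle.coe_two_pi]
        exact T.zero_mem
    exact hle hxmem
  refine ⟨hirr, ?_, hdense⟩
  intro hfin
  haveI := angle_infinite
  have hclosed : IsClosed (T : Set Real.Angle) := hfin.isClosed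
  have : (T : Set Real.Angle) = Set.univ := by
    rw [← hclosed.closure_eq]
    exact hdense.closure_eq
  rw [this] at hfin
  exact Set.infinite_univ hfin
end
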